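/- Let k be an algebraically closed field of characteristic 2 and let n ≥ 2. If W is a k-linear subspace of sp(2n,k) that is invariant under conjugation by the symplectic group, i.e. g w g⁻¹ ∈ W for every w ∈ W and every g ∈ Sp(2n,k), then either W contains the subalgebra 𝔫 or W is contained in the center of sp(2n,k). -/

import Mathlib

open Matrix

noncomputable section

/-- The matrix of the standard symplectic form: `[[0, Iₙ], [−Iₙ, 0]]`. -/
def spJ (k : Type*) [Field k] (n : ℕ) :
    Matrix (Fin n ⊕ Fin n) (Fin n ⊕ Fin n) k :=
  Matrix.fromBlocks 0 1 (-1) 0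

/-- The symplectic Lie algebra `sp(2n,k) = {x : xᵀJ + Jx = 0}`, as a subset of the
matrix Lie algebra (with bracket `⁅x,y⁆ = x*y - y*x`). -/
def spSet (k : Type*) [Field k] (n : ℕ) :
    Set (Matrix (Fin n ⊕ Fin n) (Fin n ⊕ Fin n) k) :=
  {x | xᵀ * spJ k n + spJ k n * x = 0}

/-- The symplectic group `Sp(2n,k) = {g : gᵀJg = J}`. -/
def SpGroup (k : Type*) [Field k] (n : ℕ) :
    Set (Matrix (Fin n ⊕ Fin n) (Fin n ⊕ Fin n) k) :=
  {g | gᵀ * spJ k n * g = spJ k n}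

/-- The derived subalgebra `𝔪 = ⁅sp(2n,k), sp(2n,k)⁆`, i.e. the span of all brackets of
pairs of elements of `sp(2n,k)`. -/
def spm (k : Type*) [Field k] (n : ℕ) :
    Submodule k (Matrix (Fin n ⊕ Fin n) (Fin n ⊕ Fin n) k) :=
  Submodule.span k {m | ∃ x ∈ spSet k n, ∃ y ∈ spSet k n, m = x * y - y * x}

/-- The second derived subalgebra `𝔫 = ⁅𝔪, 𝔪⁆`. -/
def spn (k : Type*) [Field k] (n : ℕ) :
    Submodule k (Matrix (Fin n ⊕ Fin n) (Fin n ⊕ Fin n) k) :=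
  Submodule.span k {m | ∃ x ∈ spm k n, ∃ y ∈ spm k n, m = x * y - y * x}

/-- The center `{x ∈ sp(2n,k) : ⁅x,y⁆ = 0 for all y ∈ sp(2n,k)}`. -/
def spCenter (k : Type*) [Field k] (n : ℕ) :
    Set (Matrix (Fin n ⊕ Fin n) (Fin n ⊕ Fin n) k) :=
  {x ∈ spSet k n | ∀ y ∈ spSet k n, x * y - y * x = 0}

/-!
Write `ω(x, y) = xᵀ J y`. Conjugating `W` by the symplectic transvections `1 + t • J u uᵀ`, with `t`
ranging over the infinite field `k`, shows that `W` is stable under bracketing with the rank-one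
elements `J u uᵀ`. These span `sp(2n,k)`, so a non-central `w ∈ W` has a nonzero bracket
`J (v pᵀ + p vᵀ)` with one of them, and in characteristic 2 this forces `v, p` to be linearly
independent. The bracket
`⁅J u uᵀ, J (a bᵀ + b aᵀ)⁆ = ω(u, a) J (u bᵀ + b uᵀ) + ω(u, b) J (u aᵀ + a uᵀ)`
then moves such elements around; using `n ≥ 2` to find vectors orthogonal to two given ones, `W`
contains `J (x yᵀ + y xᵀ)` whenever `ω(x, y) = 0`. Finally, in characteristic 2 every `x ∈ 𝔫` has
`J x` alternating and its lower-right block traceless, which makes `x` a combination of such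
isotropic pairs.
-/

namespace Matrix

variable {ι R : Type*}

lemma IsSymm.exists_eq_add_transpose_add_diagonal [DecidableEq ι] [AddCommMonoid R]
    {S : Matrix ι ι R} (hS : S.IsSymm) : ∃ U : Matrix ι ι R, S = U + Uᵀ + diagonal S.diag := by
  let _ : LinearOrder ι := WellOrderingRel.isWellOrder.linearOrder
  refine ⟨of fun a b ↦ if a < b then S a b else 0, ?_⟩
  ext a b
  rcases lt_trichotomy a b with h | rfl | h
  · simp [h, h.ne, h.not_gt]
  · simp
  · simp [h, h.ne', h.not_gt, hS.apply]

lemma add_transpose_eq_sum_vecMulVec [Fintype ι] [DecidableEq ι] [CommSemiring R]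
    (U : Matrix ι ι R) :
    U + Uᵀ = ∑ a, ∑ b, U a b • (vecMulVec (Pi.single a 1) (Pi.single b 1) +
      vecMulVec (Pi.single b 1) (Pi.single a 1)) := by
  ext i j
  simp [Matrix.sum_apply, vecMulVec_apply, Pi.single_apply, Finset.sum_add_distrib]

lemma diagonal_eq_sum_vecMulVec [Fintype ι] [DecidableEq ι] [CommSemiring R] (d : ι → R) :
    diagonal d = ∑ a, d a • vecMulVec (Pi.single a 1) (Pi.single a 1) := by
  ext i j
  by_cases h : i = j <;> simp [Matrix.sum_apply, vecMulVec_apply, Pi.single_apply, h]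

lemma diag_add_transpose_self [Ring R] [CharP R 2] (M : Matrix ι ι R) : (M + Mᵀ).diag = 0 := by
  ext a
  simp [CharTwo.add_self_eq_zero]

lemma trace_add_transpose_mul_of_isSymm [Fintype ι] [CommRing R] [CharP R 2] (U : Matrix ι ι R)
    {M : Matrix ι ι R} (hM : M.IsSymm) : trace ((U + Uᵀ) * M) = 0 := by
  rw [Matrix.add_mul, trace_add, ← trace_transpose (Uᵀ * M), transpose_mul, transpose_transpose,
    hM.eq, trace_mul_comm M U, CharTwo.add_self_eq_zero]

end Matrix

lemma Submodule.mem_of_forall_smul_sub_sq_smul_mem {k M : Type*} [Field k] [Infinite k]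
    [AddCommGroup M] [Module k M] (W : Submodule k M) {a b : M}
    (h : ∀ t : k, t • a - t ^ 2 • b ∈ W) : a ∈ W := by
  classical
  obtain ⟨c, hc⟩ := Infinite.exists_notMem_finset ({0, 1} : Finset k)
  have hc' : c ^ 2 - c ≠ 0 := by
    simp only [Finset.mem_insert, Finset.mem_singleton, not_or] at hc
    rw [sq, ← mul_sub_one]
    exact mul_ne_zero hc.1 (sub_ne_zero.mpr hc.2)
  have hb : b ∈ W := by
    refine (W.smul_mem_iff hc').mp ?_
    convert W.sub_mem (W.smul_mem c (h 1)) (h c) using 1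
    module
  simpa using W.add_mem (h 1) hb

namespace SpLie

variable {k : Type*} [Field k] {n : ℕ}

local notation "𝕍" => Fin n ⊕ Fin n → k
local notation "𝕄" => Matrix (Fin n ⊕ Fin n) (Fin n ⊕ Fin n) k

lemma spJ_eq_neg_J : spJ k n = -Matrix.J (Fin n) k := by
  simp [spJ, Matrix.J, fromBlocks_neg]

lemma spJ_transpose : (spJ k n)ᵀ = -spJ k n := by
  rw [spJ_eq_neg_J, transpose_neg, J_transpose]

lemma spJ_mul_spJ : spJ k n * spJ k n = -1 := by
  rw [spJ_eq_neg_J, neg_mul_neg, J_squared]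

lemma spJ_mul_spJ_mul (x : 𝕄) : spJ k n * (spJ k n * x) = -x := by
  rw [← Matrix.mul_assoc, spJ_mul_spJ, neg_one_mul]

lemma mem_spSet_iff {x : 𝕄} : x ∈ spSet k n ↔ (spJ k n * x).IsSymm := by
  rw [spSet, Set.mem_ofPred_eq, IsSymm, transpose_mul, spJ_transpose, Matrix.mul_neg,
    neg_eq_iff_add_eq_zero, add_comm]

lemma mul_spJ_of_mem_spSet {w : 𝕄} (hw : w ∈ spSet k n) : w * spJ k n = -(spJ k n * wᵀ) := by
  have hJw : spJ k n * w = -(wᵀ * spJ k n) := eq_neg_of_add_eq_zero_right hw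
  calc w * spJ k n = -(spJ k n * (spJ k n * w) * spJ k n) := by
        rw [spJ_mul_spJ_mul, neg_mul, neg_neg]
    _ = -(spJ k n * wᵀ) := by
        rw [hJw, Matrix.mul_neg, Matrix.neg_mul, Matrix.mul_assoc, Matrix.mul_assoc, spJ_mul_spJ]
        simp

lemma isSymm_mul_spJ {y : 𝕄} (hy : y ∈ spSet k n) : (y * spJ k n).IsSymm := by
  rw [IsSymm, transpose_mul, spJ_transpose, Matrix.neg_mul, mul_spJ_of_mem_spSet hy]

lemma spJ_mul_lie {x y : 𝕄} (hx : x ∈ spSet k n) (hy : y ∈ spSet k n) :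
    spJ k n * ⁅x, y⁆ = spJ k n * x * y + (spJ k n * x * y)ᵀ := by
  have hx' : xᵀ * spJ k n = -(spJ k n * x) := eq_neg_of_add_eq_zero_left hx
  have hy' : yᵀ * spJ k n = -(spJ k n * y) := eq_neg_of_add_eq_zero_left hy
  have hT : (spJ k n * x * y)ᵀ = -(spJ k n * y * x) := by
    rw [transpose_mul, transpose_mul, spJ_transpose, Matrix.mul_neg, hx', neg_neg,
      ← Matrix.mul_assoc, hy', Matrix.neg_mul]
  rw [hT, Ring.lie_def, Matrix.mul_sub, ← Matrix.mul_assoc, ← Matrix.mul_assoc, sub_eq_add_neg]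

variable (k n) in
def spForm : LinearMap.BilinForm k (Fin n ⊕ Fin n → k) :=
  Matrix.toLinearMap₂' k (spJ k n)

lemma spForm_apply (x y : 𝕍) : spForm k n x y = x ⬝ᵥ (spJ k n *ᵥ y) :=
  Matrix.toLinearMap₂'_apply' _ _ _

lemma spForm_apply_eq_sum (x y : 𝕍) :
    spForm k n x y = ∑ i, (x (.inl i) * y (.inr i) - x (.inr i) * y (.inl i)) := by
  simp [spForm_apply, spJ, dotProduct, Fintype.sum_sum_type, fromBlocks_mulVec, Matrix.neg_mulVec,
    Finset.sum_add_distrib, sub_eq_add_neg]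

lemma spForm_swap (x y : 𝕍) : spForm k n y x = -spForm k n x y := by
  simp only [spForm_apply_eq_sum, ← Finset.sum_neg_distrib]
  exact Finset.sum_congr rfl fun _ _ ↦ by ring

lemma spForm_eq_zero_comm {x y : 𝕍} : spForm k n x y = 0 ↔ spForm k n y x = 0 := by
  rw [spForm_swap x, neg_eq_zero]

lemma spForm_self (x : 𝕍) : spForm k n x x = 0 := by
  simp [spForm_apply_eq_sum, mul_comm]

lemma eq_zero_of_forall_spForm_eq_zero {x : 𝕍} (hx : ∀ u, spForm k n x u = 0) : x = 0 := by
  ext (i | i)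
  · simpa [spForm_apply_eq_sum, Pi.single_apply] using hx (Pi.single (.inr i) 1)
  · simpa [spForm_apply_eq_sum, Pi.single_apply] using hx (Pi.single (.inl i) 1)

lemma exists_spForm_eq_zero_and_eq_one {v p : 𝕍} (hp : ∀ c : k, p ≠ c • v) :
    ∃ u, spForm k n u v = 0 ∧ spForm k n u p = 1 := by
  by_contra! h
  have hker : LinearMap.ker (LinearMap.flip (spForm k n) v) ≤
      LinearMap.ker (LinearMap.flip (spForm k n) p) := by
    intro u hu
    by_contra hpu
    exact h ((spForm k n u p)⁻¹ • u) (by simp_all) (by simp_all)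
  obtain ⟨c, hc⟩ : ∃ c : k, c • LinearMap.flip (spForm k n) v = LinearMap.flip (spForm k n) p := by
    have := mem_span_of_iInf_ker_le_ker
      (L := fun _ : Unit ↦ LinearMap.flip (spForm k n) v) (by simpa)
    rwa [Set.range_const, Submodule.mem_span_singleton] at this
  refine hp c (eq_of_sub_eq_zero (eq_zero_of_forall_spForm_eq_zero fun u ↦ ?_))
  rw [spForm_swap u, ← LinearMap.flip_apply, map_sub, map_smul, ← hc]
  simp

lemma exists_ne_zero_spForm_eq_zero (hn : 2 ≤ n) (v y : 𝕍) :
    ∃ z ≠ 0, spForm k n z v = 0 ∧ spForm k n z y = 0 := by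
  have hker := LinearMap.ker_ne_bot_of_finrank_lt
    (f := (LinearMap.flip (spForm k n) v).prod (LinearMap.flip (spForm k n) y)) (by simp; omega)
  obtain ⟨z, hz, hz0⟩ := Submodule.exists_mem_ne_zero_of_ne_bot hker
  simp only [LinearMap.mem_ker, LinearMap.prod_apply, Function.prod, Prod.mk_eq_zero] at hz
  exact ⟨z, hz0, hz⟩

def spRankOne (u : 𝕍) : 𝕄 := spJ k n * vecMulVec u u

def spPair (a b : 𝕍) : 𝕄 := spJ k n * (vecMulVec a b + vecMulVec b a)

lemma spPair_comm (a b : 𝕍) : spPair a b = spPair b a := by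
  rw [spPair, spPair, add_comm]

lemma spPair_add_left (a a' b : 𝕍) : spPair (a + a') b = spPair a b + spPair a' b := by
  simp only [spPair, add_vecMulVec, vecMulVec_add, ← Matrix.mul_add]
  abel_nf

lemma spPair_sub_right (a b b' : 𝕍) : spPair a (b - b') = spPair a b - spPair a b' := by
  simp only [spPair, vecMulVec_sub, sub_vecMulVec, ← Matrix.mul_sub]
  abel_nf

lemma spPair_smul_right (c : k) (a b : 𝕍) : spPair a (c • b) = c • spPair a b := by
  simp only [spPair, vecMulVec_smul, smul_vecMulVec, ← smul_add, Matrix.mul_smul]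

lemma spPair_zero_right (a : 𝕍) : spPair a 0 = 0 := by
  simpa using spPair_smul_right (0 : k) a 0

lemma spPair_eq_spRankOne (a b : 𝕍) :
    spPair a b = spRankOne (a + b) - spRankOne a - spRankOne b := by
  simp only [spPair, spRankOne, add_vecMulVec, vecMulVec_add, ← Matrix.mul_sub]
  abel_nf

lemma vecMulVec_mul_spJ_mul_vecMulVec (a b c d : 𝕍) :
    vecMulVec a b * spJ k n * vecMulVec c d = spForm k n b c • vecMulVec a d := by
  rw [vecMulVec_mul, vecMulVec_mul_vecMulVec, vecMulVec_smul, spForm_apply, dotProduct_mulVec]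

lemma lie_spRankOne_spPair (u a b : 𝕍) :
    ⁅spRankOne u, spPair a b⁆ = spForm k n u a • spPair u b + spForm k n u b • spPair u a := by
  have hJ (X Y : 𝕄) : spJ k n * X * (spJ k n * Y) = spJ k n * (X * spJ k n * Y) := by
    simp only [Matrix.mul_assoc]
  rw [Ring.lie_def, spRankOne, spPair, hJ, hJ, Matrix.mul_add, Matrix.add_mul, Matrix.add_mul]
  simp only [vecMulVec_mul_spJ_mul_vecMulVec, spForm_swap u, spPair, Matrix.mul_add,
    Matrix.mul_smul, smul_add, neg_smul, Matrix.mul_neg]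
  abel

lemma lie_spRankOne_of_mem_spSet {w : 𝕄} (hw : w ∈ spSet k n) (v : 𝕍) :
    ⁅spRankOne v, w⁆ = spPair v (wᵀ *ᵥ v) := by
  have h₁ : spJ k n * vecMulVec v v * w = spJ k n * vecMulVec v (wᵀ *ᵥ v) := by
    rw [Matrix.mul_assoc, vecMulVec_mul, mulVec_transpose]
  have h₂ : w * (spJ k n * vecMulVec v v) = -(spJ k n * vecMulVec (wᵀ *ᵥ v) v) := by
    rw [← Matrix.mul_assoc, mul_spJ_of_mem_spSet hw, Matrix.neg_mul, Matrix.mul_assoc,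
      mul_vecMulVec]
  rw [Ring.lie_def, spRankOne, h₁, h₂, sub_neg_eq_add, spPair, Matrix.mul_add]

lemma spRankOne_mul_self (u : 𝕍) : spRankOne u * spRankOne u = 0 := by
  rw [spRankOne, Matrix.mul_assoc, ← Matrix.mul_assoc (vecMulVec u u),
    vecMulVec_mul_spJ_mul_vecMulVec, spForm_self, zero_smul, Matrix.mul_zero]

lemma one_add_smul_spRankOne_mem_SpGroup (t : k) (u : 𝕍) :
    1 + t • spRankOne u ∈ SpGroup k n := by
  have hT : (spRankOne u)ᵀ * spJ k n = vecMulVec u u := by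
    rw [spRankOne, transpose_mul, transpose_vecMulVec, spJ_transpose, Matrix.mul_neg,
      Matrix.neg_mul, Matrix.mul_assoc, spJ_mul_spJ]
    simp
  have hJ : spJ k n * spRankOne u = -vecMulVec u u := spJ_mul_spJ_mul _
  have hE : vecMulVec u u * spRankOne u = 0 := by
    rw [spRankOne, ← Matrix.mul_assoc, vecMulVec_mul_spJ_mul_vecMulVec, spForm_self, zero_smul]
  change (1 + t • spRankOne u)ᵀ * spJ k n * (1 + t • spRankOne u) = spJ k n
  simp only [transpose_add, transpose_one, transpose_smul, Matrix.add_mul, Matrix.mul_add,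
    Matrix.one_mul, Matrix.mul_one, Matrix.smul_mul, Matrix.mul_smul, hT, hJ, hE, smul_zero]
  module

lemma inv_one_add_smul_spRankOne (t : k) (u : 𝕍) :
    (1 + t • spRankOne u)⁻¹ = 1 - t • spRankOne u := by
  refine Matrix.inv_eq_right_inv ?_
  simp only [Matrix.mul_sub, Matrix.add_mul, Matrix.one_mul, Matrix.mul_one, Matrix.smul_mul,
    Matrix.mul_smul, spRankOne_mul_self, smul_zero, add_zero, add_sub_cancel_right]

lemma lie_spRankOne_mem [Infinite k] {W : Submodule k 𝕄}
    (hW : ∀ w ∈ W, ∀ g ∈ SpGroup k n, g * w * g⁻¹ ∈ W) {w : 𝕄} (hw : w ∈ W) (u : 𝕍) :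
    ⁅spRankOne u, w⁆ ∈ W := by
  refine W.mem_of_forall_smul_sub_sq_smul_mem (b := spRankOne u * w * spRankOne u) fun t ↦ ?_
  convert W.sub_mem (hW w hw _ (one_add_smul_spRankOne_mem_SpGroup t u)) hw using 1
  rw [inv_one_add_smul_spRankOne, Ring.lie_def]
  simp only [Matrix.mul_sub, Matrix.add_mul, Matrix.one_mul, Matrix.mul_one, Matrix.smul_mul,
    Matrix.mul_smul, sq]
  module

lemma spJ_mul_add_transpose (U : 𝕄) :
    spJ k n * (U + Uᵀ) = ∑ a, ∑ b, U a b • spPair (Pi.single a 1) (Pi.single b 1) := by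
  simp only [add_transpose_eq_sum_vecMulVec, Matrix.mul_sum, Matrix.mul_smul, spPair]

lemma mem_span_spRankOne {x : 𝕄} (hx : x ∈ spSet k n) :
    x ∈ Submodule.span k (Set.range spRankOne) := by
  obtain ⟨U, hU⟩ := (mem_spSet_iff.mp hx).exists_eq_add_transpose_add_diagonal
  have hmem (u : 𝕍) : spRankOne u ∈ Submodule.span k (Set.range spRankOne) :=
    Submodule.subset_span ⟨u, rfl⟩
  rw [← neg_neg x, ← spJ_mul_spJ_mul x, hU, Matrix.mul_add, spJ_mul_add_transpose,
    diagonal_eq_sum_vecMulVec, Matrix.mul_sum]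
  refine neg_mem (add_mem (sum_mem fun a _ ↦ sum_mem fun b _ ↦ Submodule.smul_mem _ _ ?_)
    (sum_mem fun a _ ↦ ?_))
  · rw [spPair_eq_spRankOne]
    exact sub_mem (sub_mem (hmem _) (hmem _)) (hmem _)
  · rw [Matrix.mul_smul]
    exact Submodule.smul_mem _ _ (hmem _)

lemma exists_lie_spRankOne_ne_zero {w : 𝕄} (hw : w ∈ spSet k n) (hwc : w ∉ spCenter k n) :
    ∃ v : 𝕍, ⁅spRankOne v, w⁆ ≠ 0 := by
  by_contra! h
  have hker : Submodule.span k (Set.range spRankOne) ≤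
      LinearMap.ker (LinearMap.mulLeft k w - LinearMap.mulRight k w) := by
    rw [Submodule.span_le]
    rintro _ ⟨v, rfl⟩
    rw [SetLike.mem_coe, LinearMap.mem_ker, LinearMap.sub_apply, LinearMap.mulLeft_apply,
      LinearMap.mulRight_apply, sub_eq_zero]
    exact (sub_eq_zero.mp (h v)).symm
  exact hwc ⟨hw, fun y hy ↦ by simpa using hker (mem_span_spRankOne hy)⟩

def PerpPairsMem (W : Submodule k 𝕄) (v : 𝕍) : Prop :=
  ∀ u, spForm k n u v = 0 → spPair u v ∈ W

lemma perpPairsMem_of_spPair_mem {W : Submodule k 𝕄}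
    (hW : ∀ u : 𝕍, ∀ w ∈ W, ⁅spRankOne u, w⁆ ∈ W) {v p : 𝕍} (hvp : spPair v p ∈ W)
    (hp : ∀ c : k, p ≠ c • v) : PerpPairsMem W v := by
  have hlie (u : 𝕍) : spForm k n u v • spPair u p + spForm k n u p • spPair u v ∈ W :=
    lie_spRankOne_spPair u v p ▸ hW u _ hvp
  obtain ⟨s, hsv, hsp⟩ := exists_spForm_eq_zero_and_eq_one hp
  have hs : spPair s v ∈ W := by simpa [hsv, hsp] using hlie s
  intro u hu
  by_cases hup : spForm k n u p = 0
  · have hus := hlie (u + s)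
    simp only [map_add, LinearMap.add_apply, hu, hsv, hup, hsp, add_zero, zero_add, zero_smul,
      one_smul, spPair_add_left] at hus
    simpa using W.sub_mem hus hs
  · simpa [hu, W.smul_mem_iff hup] using hlie u

lemma perpPairsMem_of_perpPairsMem (hn : 2 ≤ n) {W : Submodule k 𝕄}
    (hW : ∀ u : 𝕍, ∀ w ∈ W, ⁅spRankOne u, w⁆ ∈ W) {v : 𝕍} (hv₀ : v ≠ 0)
    (hv : PerpPairsMem W v) (y : 𝕍) : PerpPairsMem W y := by
  by_cases hyv : ∃ c : k, y = c • v
  · obtain ⟨c, rfl⟩ := hyv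
    intro u hu
    rcases eq_or_ne c 0 with rfl | hc
    · simp [spPair_zero_right]
    · rw [spPair_smul_right]
      exact W.smul_mem c (hv u (by simpa [hc] using hu))
  push Not at hyv
  have hvy (c : k) : v ≠ c • y := by
    rintro rfl
    rcases eq_or_ne c 0 with rfl | hc
    · exact hv₀ (zero_smul k y)
    · exact hyv c⁻¹ (by rw [smul_smul, inv_mul_cancel₀ hc, one_smul])
  by_cases hperp : spForm k n y v = 0
  · exact perpPairsMem_of_spPair_mem hW (hv y hperp) hvy
  -- pass from `v` to `y` through a nonzero `z` orthogonal to both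
  obtain ⟨z, hz₀, hzv, hzy⟩ := exists_ne_zero_spForm_eq_zero hn v y
  have hz : PerpPairsMem W z := by
    refine perpPairsMem_of_spPair_mem hW (hv z hzv) fun c hc ↦ hperp ?_
    rw [hc, map_smul, spForm_eq_zero_comm.mp hzy, smul_zero]
  refine perpPairsMem_of_spPair_mem hW (hz y (spForm_eq_zero_comm.mp hzy)) fun c hc ↦ hz₀ ?_
  have hcy : c * spForm k n y v = 0 := by
    rw [← smul_eq_mul, ← LinearMap.smul_apply, ← map_smul, ← hc, hzv]
  rw [hc, (mul_eq_zero.mp hcy).resolve_right hperp, zero_smul]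

lemma spPair_mem_of_spForm_eq_zero (hn : 2 ≤ n) {W : Submodule k 𝕄}
    (hW : ∀ u : 𝕍, ∀ w ∈ W, ⁅spRankOne u, w⁆ ∈ W) {v p : 𝕍} (hvp : spPair v p ∈ W)
    (hv : v ≠ 0) (hp : ∀ c : k, p ≠ c • v) {x y : 𝕍} (hxy : spForm k n x y = 0) :
    spPair x y ∈ W :=
  perpPairsMem_of_perpPairsMem hn hW hv (perpPairsMem_of_spPair_mem hW hvp hp) y x hxy

variable (k n) in
def spAlt : Submodule k 𝕄 where
  carrier := {x | (spJ k n * x).IsSymm ∧ (spJ k n * x).diag = 0}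
  add_mem' := by
    rintro x y ⟨hx, hx'⟩ ⟨hy, hy'⟩
    exact ⟨by simpa [Matrix.mul_add] using hx.add hy, by simp [Matrix.mul_add, hx', hy']⟩
  zero_mem' := by simp
  smul_mem' := by
    rintro c x ⟨hx, hx'⟩
    exact ⟨by simpa using hx.smul c, by simp [hx']⟩

variable (k n) in
/-- Writing `x ∈ spAlt k n` as `J (U + Uᵀ)`, this is `∑ a, U a a.swap`, the total coefficient of
the hyperbolic pairs `spHyperbolicPair a`. -/
def lowerRightTrace : 𝕄 →ₗ[k] k where
  toFun x := ∑ t, x (.inr t) (.inr t)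
  map_add' x y := by simp [Finset.sum_add_distrib]
  map_smul' c x := by simp [Finset.mul_sum]

def spHyperbolicPair (a : Fin n ⊕ Fin n) : 𝕄 := spPair (Pi.single a (1 : k)) (Pi.single a.swap 1)

lemma spAlt_le_spSet {x : 𝕄} (hx : x ∈ spAlt k n) : x ∈ spSet k n := mem_spSet_iff.mpr hx.1

section CharTwo

variable [CharP k 2]

lemma spJ_mul_spJ_mul_of_charTwo (x : 𝕄) : spJ k n * (spJ k n * x) = x := by
  rw [spJ_mul_spJ_mul]
  ext a b
  exact CharTwo.neg_eq _

lemma spJ_mul_apply (M : 𝕄) (a b : Fin n ⊕ Fin n) : (spJ k n * M) a b = M a.swap b := by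
  rcases a with i | i <;>
    simp [spJ, Matrix.mul_apply, Fintype.sum_sum_type, one_apply, CharTwo.neg_eq]

lemma mul_spJ_apply (M : 𝕄) (a b : Fin n ⊕ Fin n) : (M * spJ k n) a b = M a b.swap := by
  rcases b with j | j <;>
    simp [spJ, Matrix.mul_apply, Fintype.sum_sum_type, one_apply, CharTwo.neg_eq]

lemma spForm_single_single (a b : Fin n ⊕ Fin n) :
    spForm k n (Pi.single a 1) (Pi.single b 1) = if a.swap = b then 1 else 0 := by
  have hJ := spJ_mul_apply (1 : 𝕄) a b
  rw [Matrix.mul_one, one_apply] at hJ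
  rw [spForm_apply, mulVec_single_one, single_one_dotProduct, col_apply, hJ]

lemma spPair_self (a : 𝕍) : spPair a a = 0 := by
  rw [spPair, ← two_smul k, CharTwo.two_eq_zero, zero_smul, Matrix.mul_zero]

lemma ne_zero_and_ne_smul_of_spPair_ne_zero {v p : 𝕍} (h : spPair v p ≠ 0) :
    v ≠ 0 ∧ ∀ c : k, p ≠ c • v := by
  refine ⟨?_, ?_⟩
  · rintro rfl
    exact h (by rw [spPair_comm, spPair_zero_right])
  · rintro c rfl
    exact h (by rw [spPair_smul_right, spPair_self, smul_zero])

lemma lie_mem_spAlt {x y : 𝕄} (hx : x ∈ spSet k n) (hy : y ∈ spSet k n) :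
    ⁅x, y⁆ ∈ spAlt k n := by
  have h := spJ_mul_lie hx hy
  exact ⟨h ▸ isSymm_add_transpose_self _, h ▸ diag_add_transpose_self _⟩

lemma spm_le_spAlt : spm k n ≤ spAlt k n :=
  Submodule.span_le.mpr fun _ ⟨_, hx, _, hy, hm⟩ ↦ hm ▸ lie_mem_spAlt hx hy

lemma lowerRightTrace_lie {x y : 𝕄} (hx : x ∈ spSet k n) (hy : y ∈ spSet k n) :
    lowerRightTrace k n ⁅x, y⁆ = trace (x * y) := by
  calc lowerRightTrace k n ⁅x, y⁆ = ∑ t, (spJ k n * ⁅x, y⁆) (.inl t) (.inr t) := by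
        simp [lowerRightTrace, spJ_mul_apply]
    _ = ∑ a, (spJ k n * x * y) a a.swap := by
        rw [spJ_mul_lie hx hy, Fintype.sum_sum_type]
        simp only [Matrix.add_apply, transpose_apply, Finset.sum_add_distrib, Sum.swap_inl,
          Sum.swap_inr]
    _ = trace (spJ k n * x * y * spJ k n) := by simp [trace, mul_spJ_apply]
    _ = trace (x * y) := by
        rw [trace_mul_comm, Matrix.mul_assoc (spJ k n) x y, spJ_mul_spJ_mul_of_charTwo]

lemma trace_mul_eq_zero_of_mem_spAlt {x y : 𝕄} (hx : x ∈ spAlt k n) (hy : y ∈ spSet k n) :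
    trace (x * y) = 0 := by
  obtain ⟨U, hU⟩ : ∃ U, spJ k n * x = U + Uᵀ := by
    simpa [hx.2] using hx.1.exists_eq_add_transpose_add_diagonal
  calc trace (x * y) = trace (spJ k n * (U + Uᵀ) * y) := by rw [← hU, spJ_mul_spJ_mul_of_charTwo]
    _ = trace ((U + Uᵀ) * (y * spJ k n)) := by
        rw [Matrix.mul_assoc, trace_mul_comm, Matrix.mul_assoc]
    _ = 0 := trace_add_transpose_mul_of_isSymm U (isSymm_mul_spJ hy)

lemma spn_le : spn k n ≤ spAlt k n ⊓ LinearMap.ker (lowerRightTrace k n) := by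
  refine Submodule.span_le.mpr fun _ ⟨x, hx, y, hy, hm⟩ ↦ hm ▸ ?_
  have hx' := spAlt_le_spSet (spm_le_spAlt hx)
  have hy' := spAlt_le_spSet (spm_le_spAlt hy)
  refine ⟨lie_mem_spAlt hx' hy', ?_⟩
  rw [SetLike.mem_coe, LinearMap.mem_ker, ← Ring.lie_def, lowerRightTrace_lie hx' hy']
  exact trace_mul_eq_zero_of_mem_spAlt (spm_le_spAlt hx) hy'

lemma spHyperbolicPair_sub_mem {W : Submodule k 𝕄}
    (hW : ∀ x y : 𝕍, spForm k n x y = 0 → spPair x y ∈ W) (a a₀ : Fin n ⊕ Fin n) :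
    spHyperbolicPair a - spHyperbolicPair a₀ ∈ W := by
  rcases eq_or_ne a₀ a with rfl | h
  · simp
  have hexp : spHyperbolicPair a - spHyperbolicPair a₀ =
      spPair (Pi.single a 1 + Pi.single a₀ 1) (Pi.single a.swap 1 - Pi.single a₀.swap (1 : k)) +
        spPair (Pi.single a 1) (Pi.single a₀.swap (1 : k)) -
        spPair (Pi.single a₀ 1) (Pi.single a.swap (1 : k)) := by
    simp only [spHyperbolicPair, spPair_add_left, spPair_sub_right]
    abel
  rw [hexp]
  refine W.sub_mem (W.add_mem (hW _ _ ?_) (hW _ _ ?_)) (hW _ _ ?_) <;>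
    simp [spForm_single_single, Sum.swap_leftInverse.injective.eq_iff, h, h.symm]

lemma spAlt_inf_ker_lowerRightTrace_le {W : Submodule k 𝕄}
    (hW : ∀ x y : 𝕍, spForm k n x y = 0 → spPair x y ∈ W) :
    spAlt k n ⊓ LinearMap.ker (lowerRightTrace k n) ≤ W := by
  rintro x ⟨hx, hτ⟩
  rcases isEmpty_or_nonempty (Fin n ⊕ Fin n) with _ | ⟨⟨a₀⟩⟩
  · rw [Subsingleton.elim x 0]
    exact W.zero_mem
  obtain ⟨U, hU⟩ : ∃ U, spJ k n * x = U + Uᵀ := by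
    simpa [hx.2] using hx.1.exists_eq_add_transpose_add_diagonal
  have hU_swap : ∑ a, U a a.swap = 0 := by
    have hxU (t : Fin n) : x (.inr t) (.inr t) = U (.inl t) (.inr t) + U (.inr t) (.inl t) := by
      simpa [hU] using (spJ_mul_apply x (.inl t) (.inr t)).symm
    rw [← hτ.out]
    simp [lowerRightTrace, Fintype.sum_sum_type, hxU, Finset.sum_add_distrib]
  -- each hyperbolic pair is offset by the fixed one at `a₀`; the offsets cancel as `hU_swap`
  have hmem (a b : Fin n ⊕ Fin n) : spPair (Pi.single a 1) (Pi.single b 1) -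
      (if b = a.swap then spHyperbolicPair a₀ else 0) ∈ W := by
    split_ifs with h
    · exact h ▸ spHyperbolicPair_sub_mem hW a a₀
    · simpa [spForm_single_single, Ne.symm h] using hW (Pi.single a 1) (Pi.single b 1)
  have hx' : x = ∑ a, ∑ b, U a b • (spPair (Pi.single a 1) (Pi.single b 1) -
      (if b = a.swap then spHyperbolicPair a₀ else 0)) := by
    simp only [smul_sub, Finset.sum_sub_distrib, smul_ite, smul_zero, Finset.sum_ite_eq',
      Finset.mem_univ, if_true, ← Finset.sum_smul, hU_swap, zero_smul, sub_zero]
    rw [← spJ_mul_add_transpose, ← hU, spJ_mul_spJ_mul_of_charTwo]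
  rw [hx']
  exact Submodule.sum_mem _ fun a _ ↦ Submodule.sum_mem _ fun b _ ↦ W.smul_mem _ (hmem a b)

end CharTwo

end SpLie

open SpLie

/-- Let `k` be algebraically closed of characteristic 2 and `n ≥ 2`. If `W` is a
`k`-linear subspace of `sp(2n,k)` invariant under conjugation by `Sp(2n,k)`, then
either `W ⊇ 𝔫` or `W` is contained in the center of `sp(2n,k)`. -/
theorem stmt6 (k : Type*) [Field k] [IsAlgClosed k] [CharP k 2] (n : ℕ) (hn : 2 ≤ n)
    (W : Submodule k (Matrix (Fin n ⊕ Fin n) (Fin n ⊕ Fin n) k))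
    (hWsp : (W : Set (Matrix (Fin n ⊕ Fin n) (Fin n ⊕ Fin n) k)) ⊆ spSet k n)
    (hWinv : ∀ w ∈ W, ∀ g ∈ SpGroup k n, g * w * g⁻¹ ∈ W) :
    (spn k n : Set (Matrix (Fin n ⊕ Fin n) (Fin n ⊕ Fin n) k)) ⊆ W ∨
    (W : Set (Matrix (Fin n ⊕ Fin n) (Fin n ⊕ Fin n) k)) ⊆ spCenter k n := by
  refine or_iff_not_imp_right.mpr fun hcenter ↦ ?_
  obtain ⟨w, hwW, hwc⟩ := Set.not_subset.mp hcenter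
  have hw := hWsp hwW
  have hlie (u : Fin n ⊕ Fin n → k) : ∀ w' ∈ W, ⁅spRankOne u, w'⁆ ∈ W :=
    fun _ hw' ↦ lie_spRankOne_mem hWinv hw' u
  obtain ⟨v, hv⟩ := exists_lie_spRankOne_ne_zero hw hwc
  have hvp := hlie v w hwW
  rw [lie_spRankOne_of_mem_spSet hw] at hv hvp
  obtain ⟨hv₀, hp⟩ := ne_zero_and_ne_smul_of_spPair_ne_zero hv
  have hiso (x y : Fin n ⊕ Fin n → k) (hxy : spForm k n x y = 0) : spPair x y ∈ W :=
    spPair_mem_of_spForm_eq_zero hn hlie hvp hv₀ hp hxy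
  exact SetLike.coe_subset_coe.mpr (spn_le.trans (spAlt_inf_ker_lowerRightTrace_le hiso))
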